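/- arXiv:1204.1180 — 2 statements merged into one kernel-verified Lean document; each statement's English description precedes it below -/
import Mathlib

section
/- Let α > 0 with α ≠ 2 and let d > min(α,2) =: m. There is a constant C < ∞, depending only on d, α and the constants of the Assumption, such that for every L ≥ 1, every step distribution D satisfying items (i)–(iv) of the Assumption with parameters α, L, every p ∈ [0,1] and every x ∈ ℤ^d: δ_{o,x} ≤ S_p(x) ≤ δ_{o,x} + C·L^{−m}·⟨x⟩_L^{−(d−m)}. -/
open scoped BigOperators ENNReal
open Filter MeasureTheory

noncomputable section

namespace LongRange

abbrev V (d : ℕ) : Type := Fin d → ℤ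

variable {d : ℕ}

def nrm (x : V d) : ℝ := Real.sqrt (∑ i, ((x i : ℝ)) ^ 2)

def knrm (k : Fin d → ℝ) : ℝ := Real.sqrt (∑ i, (k i) ^ 2)

def bkt (L : ℝ) (x : V d) : ℝ := max (nrm x) L

def kdelta (x : V d) : ℝ := if x = 0 then 1 else 0

structure IsStepDist (D : V d → ℝ) : Prop where
  nonneg : ∀ x, 0 ≤ D x
  le_one : ∀ x, D x ≤ 1
  sum_one : HasSum D 1
  ne_one : D 0 ≠ 1
  reflect : ∀ (s : Fin d → Bool) (x : V d),
      D (fun i => if s i then -(x i) else x i) = D x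
  perm : ∀ (e : Equiv.Perm (Fin d)) (x : V d), D (fun i => x (e i)) = D x

def convPow (D : V d → ℝ) : ℕ → V d → ℝ
  | 0, x => kdelta x
  | n + 1, x => ∑' y : V d, convPow D n y * D (x - y)

def Sgreen (D : V d → ℝ) (p : ℝ) (x : V d) : ℝ≥0∞ :=
  ∑' n : ℕ, ENNReal.ofReal (p ^ n * convPow D n x)

def sawG (D : V d → ℝ) (p : ℝ) (x : V d) : ℝ≥0∞ :=
  ∑' n : ℕ,
    ∑' ω : {ω : Fin (n + 1) → V d //
        ω 0 = 0 ∧ ω (Fin.last n) = x ∧ Function.Injective ω},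
      ENNReal.ofReal (p ^ n * ∏ j : Fin n, D (ω.1 j.succ - ω.1 j.castSucc))

def chi (D : V d → ℝ) (p : ℝ) : ℝ≥0∞ := ∑' x : V d, sawG D p x

def pc (D : V d → ℝ) : ℝ := sSup {p : ℝ | 0 ≤ p ∧ chi D p < ⊤}

def hatD (D : V d → ℝ) (k : Fin d → ℝ) : ℝ :=
  ∑' x : V d, Real.cos (∑ i, k i * (x i : ℝ)) * D x

def ItemI (D : V d → ℝ) (α L c₁ : ℝ) : Prop :=
  ∀ x : V d, D x ≤ c₁ * L ^ α * bkt L x ^ (-(d : ℝ) - α)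

def ItemII (D : V d → ℝ) (α L v c₄ ε : ℝ) : Prop :=
  ∀ k : Fin d → ℝ, (∀ i, |k i| ≤ Real.pi) →
    |1 - hatD D k - v * knrm k ^ min α 2| ≤ c₄ * v * knrm k ^ min α 2 * (L * knrm k) ^ ε

def ItemIIIa (D : V d → ℝ) (α L c₅ : ℝ) : Prop :=
  ∀ n : ℕ, 1 ≤ n → ∀ x : V d,
    convPow D n x ≤ c₅ * L ^ (-(d : ℝ)) * (n : ℝ) ^ (-(d : ℝ) / min α 2)

def ItemIIIb (D : V d → ℝ) (Δ : ℝ) : Prop :=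
  ∀ k : Fin d → ℝ, (∀ i, |k i| ≤ Real.pi) → 1 - hatD D k ≤ 2 - Δ

def ItemIIIc (D : V d → ℝ) (L Δ : ℝ) : Prop :=
  ∀ k : Fin d → ℝ, (∀ i, |k i| ≤ Real.pi) → (∃ i, 1 / L ≤ |k i|) → Δ ≤ 1 - hatD D k

def ItemIV (D : V d → ℝ) (α L c₆ : ℝ) : Prop :=
  ∀ n : ℕ, 1 ≤ n → ∀ x : V d,
    convPow D n x ≤ c₆ * L ^ min α 2 * (n : ℝ) * bkt L x ^ (-(d : ℝ) - min α 2)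

def ItemV (D : V d → ℝ) (α L c₇ : ℝ) : Prop :=
  ∀ n : ℕ, 1 ≤ n → ∀ x y : V d, nrm y ≤ nrm x / 3 →
    |convPow D n x - (convPow D n (x + y) + convPow D n (x - y)) / 2| ≤
      c₇ * L ^ min α 2 * bkt L y ^ 2 * (n : ℝ) * bkt L x ^ (-(d : ℝ) - min α 2 - 2)

/-!
Since `p ≤ 1`, `S_p(x) - δ_{o,x} ≤ ∑_{n ≥ 1} D^{*n}(x)`. Split this sum at
`N = ⌈(⟨x⟩_L / L)^m⌉`. For `n ≤ N`, item (iv) bounds the terms by `c₆ L^m n ⟨x⟩_L^{-d-m}`, so these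
contribute `O(L^m N² ⟨x⟩_L^{-d-m})`. For `n > N`, the uniform bound (iii) gives `c₅ L^{-d} n^{-d/m}`,
a tail of size `O(L^{-d} N^{-(d-m)/m})` because `d > m`. With this choice of `N` both parts are
`O(L^{-m} ⟨x⟩_L^{-(d-m)})`.
-/

open Finset

lemma one_add_mul_one_sub_le_rpow_neg {u t : ℝ} (hu : 0 < u) (ht : 0 ≤ t) :
    1 + t * (1 - u) ≤ u ^ (-t) := by
  have hlog : 1 - u ≤ -Real.log u := by linarith [Real.log_le_sub_one_of_pos hu]
  calc 1 + t * (1 - u) ≤ Real.exp (t * (1 - u)) := by linarith [Real.add_one_le_exp (t * (1 - u))]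
    _ ≤ Real.exp (Real.log u * -t) := Real.exp_le_exp.2 (by nlinarith)
    _ = u ^ (-t) := (Real.rpow_def_of_pos hu _).symm

lemma mul_rpow_neg_sub_one_le_sub {a t : ℝ} (ha : 0 < a) (ht : 0 ≤ t) :
    t * (a + 1) ^ (-t - 1) ≤ a ^ (-t) - (a + 1) ^ (-t) := by
  have ha1 : 0 < a + 1 := by linarith
  have hbern := one_add_mul_one_sub_le_rpow_neg (div_pos ha ha1) ht
  rw [Real.div_rpow ha.le ha1.le, le_div_iff₀ (Real.rpow_pos_of_pos ha1 _),
    show 1 - a / (a + 1) = (a + 1)⁻¹ by field_simp; ring] at hbern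
  have hsplit : (a + 1) ^ (-t - 1) = (a + 1) ^ (-t) * (a + 1)⁻¹ := by
    rw [Real.rpow_sub ha1, Real.rpow_one, div_eq_mul_inv]
  rw [hsplit]
  linarith

lemma mul_sum_range_rpow_neg_sub_one_le {a t : ℝ} (ha : 0 < a) (ht : 0 ≤ t) (k : ℕ) :
    t * ∑ i ∈ range k, (a + i + 1) ^ (-t - 1) ≤ a ^ (-t) - (a + k) ^ (-t) := by
  induction k with
  | zero => simp
  | succ k ih =>
    have hstep := mul_rpow_neg_sub_one_le_sub (by positivity : 0 < a + k) ht
    rw [sum_range_succ, mul_add, Nat.cast_succ, ← add_assoc]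
    linarith

lemma tsum_ofReal_rpow_neg_sub_one_le {a t : ℝ} (ha : 0 < a) (ht : 0 < t) :
    ∑' n : ℕ, ENNReal.ofReal ((a + n + 1) ^ (-t - 1)) ≤ ENNReal.ofReal (a ^ (-t) / t) := by
  refine ENNReal.tsum_le_of_sum_range_le fun k => ?_
  rw [← ENNReal.ofReal_sum_of_nonneg fun i _ => by positivity]
  refine ENNReal.ofReal_le_ofReal ?_
  rw [le_div_iff₀ ht]
  linarith [mul_sum_range_rpow_neg_sub_one_le ha ht.le k,
    Real.rpow_nonneg (by positivity : 0 ≤ a + k) (-t)]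

lemma tsum_ofReal_succ_le_of_linear_of_rpow {f : ℕ → ℝ} {A B t : ℝ} {N : ℕ} (hN : 1 ≤ N)
    (hA : 0 ≤ A) (hB : 0 ≤ B) (ht : 0 < t)
    (hhead : ∀ n, 1 ≤ n → n ≤ N → f n ≤ A * n) (htail : ∀ n, N < n → f n ≤ B * n ^ (-t - 1)) :
    ∑' n : ℕ, ENNReal.ofReal (f (n + 1)) ≤ ENNReal.ofReal (A * N ^ 2 + B * (N ^ (-t) / t)) := by
  have hN0 : (0 : ℝ) < N := by exact_mod_cast hN
  have head : ∑ i ∈ range N, ENNReal.ofReal (f (i + 1)) ≤ ENNReal.ofReal (A * N ^ 2) := by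
    calc ∑ i ∈ range N, ENNReal.ofReal (f (i + 1))
        ≤ ∑ _i ∈ range N, ENNReal.ofReal (A * N) := by
          refine sum_le_sum fun i hi => ENNReal.ofReal_le_ofReal ?_
          have hiN : i + 1 ≤ N := mem_range.mp hi
          calc f (i + 1) ≤ A * (i + 1 : ℕ) := hhead _ (Nat.le_add_left 1 i) hiN
            _ ≤ A * N := by gcongr
      _ = ENNReal.ofReal (A * N ^ 2) := by
          rw [sum_const, card_range, nsmul_eq_mul, ← ENNReal.ofReal_natCast,
            ← ENNReal.ofReal_mul hN0.le]
          ring_nf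
  have tail : ∑' n : ℕ, ENNReal.ofReal (f (n + N + 1)) ≤ ENNReal.ofReal (B * (N ^ (-t) / t)) := by
    calc ∑' n : ℕ, ENNReal.ofReal (f (n + N + 1))
        ≤ ∑' n : ℕ, ENNReal.ofReal B * ENNReal.ofReal ((N + n + 1 : ℝ) ^ (-t - 1)) := by
          refine ENNReal.tsum_le_tsum fun n => ?_
          rw [← ENNReal.ofReal_mul hB]
          refine ENNReal.ofReal_le_ofReal ((htail _ (by omega)).trans_eq ?_)
          push_cast; ring_nf
      _ ≤ ENNReal.ofReal B * ENNReal.ofReal (N ^ (-t) / t) := by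
          rw [ENNReal.tsum_mul_left]
          gcongr
          exact tsum_ofReal_rpow_neg_sub_one_le hN0 ht
      _ = ENNReal.ofReal (B * (N ^ (-t) / t)) := (ENNReal.ofReal_mul hB).symm
  rw [← ENNReal.summable.sum_add_tsum_nat_add' (k := N),
    ENNReal.ofReal_add (by positivity) (by positivity)]
  exact add_le_add head tail

lemma kdelta_nonneg (x : V d) : 0 ≤ kdelta x := by
  unfold kdelta; split_ifs <;> norm_num

lemma convPow_nonneg {D : V d → ℝ} (hD : ∀ y, 0 ≤ D y) (n : ℕ) (x : V d) :
    0 ≤ convPow D n x := by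
  induction n generalizing x with
  | zero => exact kdelta_nonneg x
  | succ n ih => exact tsum_nonneg fun y => mul_nonneg (ih y) (hD (x - y))

lemma Sgreen_eq_kdelta_add (D : V d → ℝ) (p : ℝ) (x : V d) :
    Sgreen D p x =
      ENNReal.ofReal (kdelta x) + ∑' n : ℕ, ENNReal.ofReal (p ^ (n + 1) * convPow D (n + 1) x) := by
  rw [Sgreen, tsum_eq_zero_add' ENNReal.summable, pow_zero, one_mul, convPow]

lemma Sgreen_le_kdelta_add_tsum {D : V d → ℝ} (hD : ∀ y, 0 ≤ D y) {p : ℝ} (hp0 : 0 ≤ p)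
    (hp1 : p ≤ 1) (x : V d) :
    Sgreen D p x ≤ ENNReal.ofReal (kdelta x) + ∑' n : ℕ, ENNReal.ofReal (convPow D (n + 1) x) := by
  rw [Sgreen_eq_kdelta_add]
  gcongr with n
  exact mul_le_of_le_one_left (convPow_nonneg hD _ _) (pow_le_one₀ hp0 hp1)

lemma rpow_mul_natCeil_sq_le {L r m d : ℝ} (hL : 0 < L) (hLr : L ≤ r) (hm : 0 < m) :
    L ^ m * r ^ (-d - m) * (⌈(r / L) ^ m⌉₊ : ℝ) ^ 2 ≤ 4 * (L ^ (-m) * r ^ (-(d - m))) := by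
  have hr : 0 < r := hL.trans_le hLr
  have hT : 1 ≤ (r / L) ^ m := Real.one_le_rpow ((one_le_div hL).mpr hLr) hm.le
  have hN : (⌈(r / L) ^ m⌉₊ : ℝ) ≤ 2 * (r / L) ^ m := Nat.ceil_le_two_mul (by linarith)
  calc L ^ m * r ^ (-d - m) * (⌈(r / L) ^ m⌉₊ : ℝ) ^ 2
      ≤ L ^ m * r ^ (-d - m) * (2 * (r / L) ^ m) ^ 2 := by gcongr
    _ = 4 * (L ^ (-m) * r ^ (-(d - m))) := by
      have hrm : r ^ (-(d - m)) = r ^ (-d - m) * r ^ m * r ^ m := by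
        rw [← Real.rpow_add hr, ← Real.rpow_add hr]; ring_nf
      rw [Real.div_rpow hr.le hL.le, Real.rpow_neg hL.le, hrm]
      field_simp
      ring

lemma rpow_mul_natCeil_rpow_le {L r m d : ℝ} (hL : 0 < L) (hLr : L ≤ r) (hm : 0 < m)
    (hmd : m < d) :
    L ^ (-d) * (⌈(r / L) ^ m⌉₊ : ℝ) ^ (-((d - m) / m)) ≤ L ^ (-m) * r ^ (-(d - m)) := by
  have hr : 0 < r := hL.trans_le hLr
  have hT : 0 < (r / L) ^ m := by positivity
  calc L ^ (-d) * (⌈(r / L) ^ m⌉₊ : ℝ) ^ (-((d - m) / m))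
      ≤ L ^ (-d) * ((r / L) ^ m) ^ (-((d - m) / m)) := by
        refine mul_le_mul_of_nonneg_left ?_ (by positivity)
        exact Real.rpow_le_rpow_of_nonpos hT (Nat.le_ceil _)
          (neg_nonpos.mpr (div_nonneg (by linarith) hm.le))
    _ = L ^ (-m) * r ^ (-(d - m)) := by
      rw [← Real.rpow_mul (by positivity), mul_neg, mul_div_cancel₀ _ hm.ne',
        Real.div_rpow hr.le hL.le, Real.rpow_neg hL.le (d - m), Real.rpow_sub hL, Real.rpow_neg hL.le,
        Real.rpow_neg hL.le]
      field_simp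

lemma mul_natCeil_sq_add_mul_natCeil_rpow_le {L r m d a b : ℝ} (hL : 0 < L) (hLr : L ≤ r)
    (hm : 0 < m) (hmd : m < d) (ha : 0 ≤ a) (hb : 0 ≤ b) :
    a * L ^ m * r ^ (-d - m) * (⌈(r / L) ^ m⌉₊ : ℝ) ^ 2
        + b * L ^ (-d) * ((⌈(r / L) ^ m⌉₊ : ℝ) ^ (-((d - m) / m)) / ((d - m) / m))
      ≤ (4 * a + b / ((d - m) / m)) * L ^ (-m) * r ^ (-(d - m)) := by
  have head := rpow_mul_natCeil_sq_le hL hLr hm (d := d)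
  have tail := rpow_mul_natCeil_rpow_le hL hLr hm hmd
  have ht : 0 ≤ (d - m) / m := div_nonneg (by linarith) hm.le
  calc _ = a * (L ^ m * r ^ (-d - m) * (⌈(r / L) ^ m⌉₊ : ℝ) ^ 2)
        + b / ((d - m) / m) * (L ^ (-d) * (⌈(r / L) ^ m⌉₊ : ℝ) ^ (-((d - m) / m))) := by ring
    _ ≤ a * (4 * (L ^ (-m) * r ^ (-(d - m)))) + b / ((d - m) / m) * (L ^ (-m) * r ^ (-(d - m))) := by
        gcongr
    _ = _ := by ring

theorem statement1_general (d : ℕ) (α : ℝ) (hα : 0 < α)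
    (hdm : min α 2 < (d : ℝ))
    (c₁ c₂ c₃ c₄ c₅ c₆ ε Δ : ℝ)
    (hc₅ : 0 < c₅) (hc₆ : 0 < c₆) :
    ∃ C : ℝ, 0 ≤ C ∧
      ∀ L : ℝ, 1 ≤ L → ∀ D : V d → ℝ, ∀ v : ℝ,
        IsStepDist D →
        c₂ * L ^ min α 2 ≤ v → v ≤ c₃ * L ^ min α 2 →
        ItemI D α L c₁ → ItemII D α L v c₄ ε →
        ItemIIIa D α L c₅ → ItemIIIb D Δ → ItemIIIc D L Δ →
        ItemIV D α L c₆ →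
        ∀ p : ℝ, 0 ≤ p → p ≤ 1 → ∀ x : V d,
          ENNReal.ofReal (kdelta x) ≤ Sgreen D p x ∧
          Sgreen D p x ≤
            ENNReal.ofReal
              (kdelta x + C * L ^ (-(min α 2)) * bkt L x ^ (-((d : ℝ) - min α 2))) := by
  set m := min α 2
  have hm : 0 < m := lt_min hα two_pos
  set t := ((d : ℝ) - m) / m
  have ht : 0 < t := div_pos (by linarith) hm
  have hexp : -(d : ℝ) / m = -t - 1 := by simp only [t]; field_simp; ring
  refine ⟨4 * c₆ + c₅ / t, by positivity, ?_⟩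
  intro L hL D v hD _ _ _ _ hIIIa _ _ hIV p hp0 hp1 x
  have hL0 : 0 < L := by linarith
  set r := bkt L x
  have hLr : L ≤ r := le_max_right _ _
  have hr : 0 < r := hL0.trans_le hLr
  set N := ⌈(r / L) ^ m⌉₊
  have hN : 1 ≤ N := Nat.one_le_ceil_iff.mpr (by positivity)
  have hsplit := tsum_ofReal_succ_le_of_linear_of_rpow (f := fun n => convPow D n x)
    (A := c₆ * L ^ m * r ^ (-(d : ℝ) - m)) (B := c₅ * L ^ (-(d : ℝ))) hN (by positivity)
    (by positivity) ht (fun n hn _ => (hIV n hn x).trans_eq (by ring))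
    (fun n hn => (hIIIa n (by omega) x).trans_eq (by rw [hexp]))
  have hbound := hsplit.trans (ENNReal.ofReal_le_ofReal
    (mul_natCeil_sq_add_mul_natCeil_rpow_le hL0 hLr hm hdm hc₆.le hc₅.le))
  refine ⟨by rw [Sgreen_eq_kdelta_add]; exact le_self_add, ?_⟩
  calc Sgreen D p x
      ≤ ENNReal.ofReal (kdelta x) + ∑' n : ℕ, ENNReal.ofReal (convPow D (n + 1) x) :=
        Sgreen_le_kdelta_add_tsum hD.nonneg hp0 hp1 x
    _ ≤ _ := by
        rw [ENNReal.ofReal_add (kdelta_nonneg x) (by positivity)]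
        exact add_le_add le_rfl hbound

/-- random-walk Green's function bound for p ≤ 1. -/
theorem statement1 (d : ℕ) (hd : 1 ≤ d) (α : ℝ) (hα : 0 < α) (hαne : α ≠ 2)
    (hdm : min α 2 < (d : ℝ))
    (c₁ c₂ c₃ c₄ c₅ c₆ ε Δ : ℝ)
    (hc₁ : 0 < c₁) (hc₂ : 0 < c₂) (hc₃ : 0 < c₃) (hc₄ : 0 < c₄)
    (hc₅ : 0 < c₅) (hc₆ : 0 < c₆)
    (hε : 0 < ε) (hε1 : ε ≤ 1) (hΔ : 0 < Δ) (hΔ1 : Δ < 1) :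
    ∃ C : ℝ, 0 ≤ C ∧
      ∀ L : ℝ, 1 ≤ L → ∀ D : V d → ℝ, ∀ v : ℝ,
        IsStepDist D →
        c₂ * L ^ min α 2 ≤ v → v ≤ c₃ * L ^ min α 2 →
        ItemI D α L c₁ → ItemII D α L v c₄ ε →
        ItemIIIa D α L c₅ → ItemIIIb D Δ → ItemIIIc D L Δ →
        ItemIV D α L c₆ →
        ∀ p : ℝ, 0 ≤ p → p ≤ 1 → ∀ x : V d,
          ENNReal.ofReal (kdelta x) ≤ Sgreen D p x ∧
          Sgreen D p x ≤
            ENNReal.ofReal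
              (kdelta x + C * L ^ (-(min α 2)) * bkt L x ^ (-((d : ℝ) - min α 2))) :=
  statement1_general d α hα hdm c₁ c₂ c₃ c₄ c₅ c₆ ε Δ hc₅ hc₆

end LongRange
end
end

section
/- Let α > 0, L ≥ 1, c₁ < ∞, and let D be a step distribution on ℤ^d satisfying D(x) ≤ c₁ L^α ⟨x⟩_L^{−d−α} for all x ∈ ℤ^d. Then for every p with χ_p < ∞ (i.e. every p < p_c for the self-avoiding walk) there exists a constant K_p < ∞ (depending on p, d, α, L, c₁ and D) such that G_p(x) ≤ K_p ⟨x⟩_L^{−d−α} for every x ∈ ℤ^d. -/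
open scoped BigOperators ENNReal
open Filter MeasureTheory

noncomputable section

open Finset

theorem ENNReal.tsum_le_mul_tsum_mul_tsum_of_injective {α β γ : Type*} {φ : α → β × γ}
    (hφ : Function.Injective φ) {f : α → ℝ≥0∞} {g : β → ℝ≥0∞} {h : γ → ℝ≥0∞} {c : ℝ≥0∞}
    (hf : ∀ a, f a ≤ c * (g (φ a).1 * h (φ a).2)) :
    ∑' a, f a ≤ c * ((∑' b, g b) * ∑' e, h e) :=
  calc ∑' a, f a ≤ ∑' a, c * (g (φ a).1 * h (φ a).2) := ENNReal.tsum_le_tsum hf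
    _ = c * ∑' a, (fun q : β × γ => g q.1 * h q.2) (φ a) := ENNReal.tsum_mul_left
    _ ≤ c * ∑' q : β × γ, g q.1 * h q.2 := by
        gcongr; exact ENNReal.tsum_comp_le_tsum_of_injective hφ _
    _ = c * ((∑' b, g b) * ∑' e, h e) := by
        rw [ENNReal.tsum_prod (f := fun b e => g b * h e), ← ENNReal.tsum_mul_right]
        simp only [ENNReal.tsum_mul_left]

theorem ENNReal.exists_le_ofReal_mul_pow_of_submul {a : ℕ → ℝ≥0∞}
    (hmul : ∀ m n, a (m + n) ≤ a m * a n) (hsum : ∑' n, a n ≠ ∞) :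
    ∃ C ρ : ℝ, 0 ≤ C ∧ 0 < ρ ∧ ρ < 1 ∧ ∀ n, a n ≤ ENNReal.ofReal (C * ρ ^ n) := by
  obtain ⟨m, hm, hm1⟩ : ∃ m, a m < ENNReal.ofReal (1 / 2) ∧ 1 ≤ m :=
    (((ENNReal.tendsto_atTop_zero_of_tsum_ne_top hsum).eventually_lt_const
      (by norm_num)).and (eventually_ge_atTop 1)).exists
  set ρ : ℝ := (1 / 2 : ℝ) ^ ((m : ℝ)⁻¹)
  have hρ0 : 0 < ρ := by positivity
  have hρ1 : ρ < 1 := Real.rpow_lt_one (by norm_num) (by norm_num) (by positivity)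
  have hρm : ρ ^ m = 1 / 2 := Real.rpow_inv_natCast_pow (by norm_num) (by omega)
  set C : ℝ := 2 * ∑ r ∈ range m, (a r).toReal
  have hC : 0 ≤ C := by positivity
  refine ⟨C, ρ, hC, hρ0, hρ1, fun n => ?_⟩
  induction n using Nat.strong_induction_on with
  | _ n ih =>
  rcases lt_or_ge n m with hnm | hmn
  · -- every initial term is at most half of `C`, and `ρ ^ n ≥ ρ ^ m = 1 / 2`
    rw [← ENNReal.ofReal_toReal (ENNReal.ne_top_of_tsum_ne_top hsum n)]
    refine ENNReal.ofReal_le_ofReal ?_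
    have hsingle : (a n).toReal ≤ ∑ r ∈ range m, (a r).toReal :=
      single_le_sum (fun _ _ => ENNReal.toReal_nonneg) (mem_range.mpr hnm)
    have hpow : ρ ^ m ≤ ρ ^ n := pow_le_pow_of_le_one hρ0.le hρ1.le hnm.le
    nlinarith
  · obtain ⟨k, rfl⟩ := Nat.exists_eq_add_of_le' hmn
    calc a (k + m) ≤ a k * a m := hmul k m
      _ ≤ ENNReal.ofReal (C * ρ ^ k) * ENNReal.ofReal (ρ ^ m) := by
          gcongr
          · exact ih k (by omega)
          · rw [hρm]; exact hm.le
      _ = ENNReal.ofReal (C * ρ ^ (k + m)) := by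
          rw [← ENNReal.ofReal_mul (by positivity), pow_add, mul_assoc]

namespace LongRange

variable {d : ℕ}

def toEuclidean (x : V d) : EuclideanSpace ℝ (Fin d) := WithLp.toLp 2 fun i => (x i : ℝ)

lemma toEuclidean_add (x y : V d) : toEuclidean (x + y) = toEuclidean x + toEuclidean y := by
  ext i
  simp [toEuclidean]

lemma nrm_eq_norm_toEuclidean (x : V d) : nrm x = ‖toEuclidean x‖ := by
  simp [nrm, toEuclidean, EuclideanSpace.norm_eq]

lemma nrm_zero : nrm (0 : V d) = 0 := by
  simp [nrm]

lemma nrm_add_le (x y : V d) : nrm (x + y) ≤ nrm x + nrm y := by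
  simpa only [nrm_eq_norm_toEuclidean, toEuclidean_add] using norm_add_le _ _

lemma exists_nrm_le_mul_nrm_step (f : ℕ → V d) {n : ℕ} (hn : 1 ≤ n) :
    ∃ j < n, nrm (f n - f 0) ≤ n * nrm (f (j + 1) - f j) := by
  have htri : nrm (f n - f 0) ≤ ∑ j ∈ range n, nrm (f (j + 1) - f j) := by
    rw [← sum_range_sub]
    exact le_sum_of_subadditive nrm nrm_zero.le nrm_add_le _ _
  obtain ⟨j, hj, hle⟩ := exists_le_of_sum_le (s := range n)
    (f := fun _ => nrm (f n - f 0)) (g := fun j => n * nrm (f (j + 1) - f j))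
    (nonempty_range_iff.mpr (by omega)) (by
      rw [sum_const, card_range, nsmul_eq_mul, ← mul_sum]
      exact mul_le_mul_of_nonneg_left htri n.cast_nonneg)
  exact ⟨j, mem_range.mp hj, hle⟩

lemma bkt_pos {L : ℝ} (hL : 0 < L) (x : V d) : 0 < bkt L x :=
  hL.trans_le (le_max_right _ _)

lemma bkt_zero {L : ℝ} (hL : 0 ≤ L) : bkt L (0 : V d) = L := by
  simp [bkt, nrm_zero, hL]

lemma bkt_le_mul_bkt {L t : ℝ} (hL : 0 ≤ L) (ht : 1 ≤ t) {x y : V d} (h : nrm x ≤ t * nrm y) :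
    bkt L x ≤ t * bkt L y :=
  max_le (h.trans (mul_le_mul_of_nonneg_left (le_max_left _ _) (by linarith)))
    ((le_max_right _ _).trans (le_mul_of_one_le_left (hL.trans (le_max_right _ _)) ht))

lemma bkt_rpow_neg_le {L t β : ℝ} (hL : 0 < L) (ht : 1 ≤ t) (hβ : 0 ≤ β) {x y : V d}
    (h : nrm x ≤ t * nrm y) : bkt L y ^ (-β) ≤ t ^ β * bkt L x ^ (-β) := by
  have ht0 : 0 < t := by linarith
  calc bkt L y ^ (-β) = t ^ β * (t * bkt L y) ^ (-β) := by
        rw [Real.mul_rpow ht0.le (bkt_pos hL y).le, Real.rpow_neg ht0.le, ← mul_assoc,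
          mul_inv_cancel₀ (by positivity), one_mul]
    _ ≤ t ^ β * bkt L x ^ (-β) :=
        mul_le_mul_of_nonneg_left (Real.rpow_le_rpow_of_nonpos (bkt_pos hL x)
          (bkt_le_mul_bkt hL.le ht h) (by linarith)) (by positivity)

section Walks

variable (D : V d → ℝ) (p : ℝ)

def walkWeight {n : ℕ} (ω : Fin (n + 1) → V d) : ℝ :=
  p ^ n * ∏ j : Fin n, D (ω j.succ - ω j.castSucc)

abbrev SAWalk (d n : ℕ) : Type :=
  {ω : Fin (n + 1) → V d // ω 0 = 0 ∧ Function.Injective ω}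

abbrev SAWalkTo (n : ℕ) (x : V d) : Type :=
  {ω : Fin (n + 1) → V d // ω 0 = 0 ∧ ω (Fin.last n) = x ∧ Function.Injective ω}

def sawGLen (n : ℕ) (x : V d) : ℝ≥0∞ :=
  ∑' ω : SAWalkTo n x, ENNReal.ofReal (walkWeight D p ω.1)

def chiLen (n : ℕ) : ℝ≥0∞ :=
  ∑' ω : SAWalk d n, ENNReal.ofReal (walkWeight D p ω.1)

lemma sawG_eq_tsum_sawGLen (x : V d) : sawG D p x = ∑' n, sawGLen D p n x := rfl

def SAWalk.equivSigma (n : ℕ) : SAWalk d n ≃ Σ x : V d, SAWalkTo n x where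
  toFun ω := ⟨ω.1 (Fin.last n), ω.1, ω.2.1, rfl, ω.2.2⟩
  invFun ω := ⟨ω.2.1, ω.2.2.1, ω.2.2.2.2⟩
  right_inv := by
    rintro ⟨x, ω, h0, rfl, hinj⟩
    rfl

lemma chiLen_eq_tsum_sawGLen (n : ℕ) : chiLen D p n = ∑' x, sawGLen D p n x := by
  rw [chiLen, ← (SAWalk.equivSigma n).symm.tsum_eq, ENNReal.tsum_sigma']
  rfl

lemma chi_eq_tsum_chiLen : chi D p = ∑' n, chiLen D p n := by
  simp only [chi, sawG_eq_tsum_sawGLen, chiLen_eq_tsum_sawGLen]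
  exact ENNReal.tsum_comm

lemma sawGLen_zero (x : V d) : sawGLen D p 0 x = ENNReal.ofReal (kdelta x) := by
  by_cases hx : x = 0
  · subst hx
    have hconst (ω : SAWalkTo 0 (0 : V d)) : ω.1 = fun _ => 0 :=
      funext fun i => (congrArg ω.1 (Fin.fin_one_eq_zero i)).trans ω.2.1
    rw [sawGLen, tsum_eq_single ⟨fun _ => 0, rfl, rfl, fun a b _ =>
      (Fin.fin_one_eq_zero a).trans (Fin.fin_one_eq_zero b).symm⟩
      fun ω hω => (hω (Subtype.ext (hconst ω))).elim]
    simp [walkWeight, kdelta]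
  · have : IsEmpty (SAWalkTo 0 x) := ⟨fun ω => hx (ω.2.2.1.symm.trans ω.2.1)⟩
    simp [sawGLen, kdelta, hx]

variable {D p}

lemma walkWeight_nonneg (hD : ∀ y, 0 ≤ D y) (hp : 0 ≤ p) {n : ℕ} (ω : Fin (n + 1) → V d) :
    0 ≤ walkWeight D p ω :=
  mul_nonneg (pow_nonneg hp n) (prod_nonneg fun _ _ => hD _)

end Walks

section Segments

/-- A walk read as a function on `ℕ`, frozen at its endpoint after time `n`. -/
def path {n : ℕ} (ω : Fin (n + 1) → V d) (i : ℕ) : V d := ω (Fin.clamp i n)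

def seg (f : ℕ → V d) (a m : ℕ) : Fin (m + 1) → V d := fun i => f (a + i) - f a

lemma path_coe {n : ℕ} (ω : Fin (n + 1) → V d) (i : Fin (n + 1)) : path ω i = ω i :=
  congrArg ω (Fin.ext (min_eq_left (Nat.lt_succ_iff.mp i.isLt)))

lemma path_zero {n : ℕ} (ω : Fin (n + 1) → V d) : path ω 0 = ω 0 :=
  path_coe ω 0

lemma path_self {n : ℕ} (ω : Fin (n + 1) → V d) : path ω n = ω (Fin.last n) :=
  path_coe ω (Fin.last n)

lemma eq_of_path_eq {n : ℕ} {ω ω' : Fin (n + 1) → V d} (h : ∀ i ≤ n, path ω i = path ω' i) :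
    ω = ω' :=
  funext fun i => by simpa only [path_coe] using h i (Nat.lt_succ_iff.mp i.isLt)

lemma seg_zero (f : ℕ → V d) (a m : ℕ) : seg f a m 0 = 0 := by
  simp [seg]

lemma seg_path_zero {n : ℕ} {ω : Fin (n + 1) → V d} (h0 : ω 0 = 0) : seg (path ω) 0 n = ω :=
  funext fun i => by simp [seg, path_coe, path_zero, h0]

lemma seg_injective {n a m : ℕ} {ω : Fin (n + 1) → V d} (hω : Function.Injective ω)
    (h : a + m ≤ n) : Function.Injective (seg (path ω) a m) := by
  intro i j hij
  have := congrArg Fin.val (hω (sub_left_inj.mp hij))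
  simp only [Fin.clamp] at this
  omega

lemma eq_of_seg_eq {f g : ℕ → V d} {a m : ℕ} (hs : seg f a m = seg g a m) (ha : f a = g a)
    {i : ℕ} (h₁ : a ≤ i) (h₂ : i ≤ a + m) : f i = g i := by
  have := congrFun hs ⟨i - a, by omega⟩
  simp only [seg, ha, sub_left_inj] at this
  rwa [Nat.add_sub_cancel' h₁] at this

lemma eq_of_seg_eq_of_end {f g : ℕ → V d} {a m : ℕ} (hs : seg f a m = seg g a m)
    (he : f (a + m) = g (a + m)) : f a = g a := by
  have := congrFun hs (Fin.last m)
  simp only [seg, Fin.val_last, he, sub_right_inj] at this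
  exact this

variable (D : V d → ℝ) (p : ℝ)

lemma walkWeight_seg (f : ℕ → V d) (a m : ℕ) :
    walkWeight D p (seg f a m) = p ^ m * ∏ i ∈ range m, D (f (a + i + 1) - f (a + i)) := by
  rw [walkWeight, ← Fin.prod_univ_eq_prod_range]
  simp [seg, add_assoc]

lemma walkWeight_eq_mul {a b : ℕ} {ω : Fin (a + b + 1) → V d} (h0 : ω 0 = 0) :
    walkWeight D p ω =
      walkWeight D p (seg (path ω) 0 a) * walkWeight D p (seg (path ω) a b) := by
  conv_lhs => rw [← seg_path_zero h0]
  simp only [walkWeight_seg, zero_add, prod_range_add, pow_add]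
  ring

lemma walkWeight_eq_mul_step_mul {j k : ℕ} {ω : Fin (j + 1 + k + 1) → V d} (h0 : ω 0 = 0) :
    walkWeight D p ω = walkWeight D p (seg (path ω) 0 j) *
      (p * D (path ω (j + 1) - path ω j)) * walkWeight D p (seg (path ω) (j + 1) k) := by
  conv_lhs => rw [← seg_path_zero h0]
  simp only [walkWeight_seg, zero_add, prod_range_add, prod_range_succ, pow_add, pow_one]
  ring

end Segments

def SAWalk.split (a b : ℕ) (ω : SAWalk d (a + b)) : SAWalk d a × SAWalk d b :=
  (⟨seg (path ω.1) 0 a, seg_zero .., seg_injective ω.2.2 (by omega)⟩,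
   ⟨seg (path ω.1) a b, seg_zero .., seg_injective ω.2.2 le_rfl⟩)

lemma SAWalk.split_injective (a b : ℕ) : Function.Injective (SAWalk.split (d := d) a b) := by
  rintro ω ω' h
  simp only [SAWalk.split, Prod.mk.injEq, Subtype.mk.injEq] at h
  have h0 : path ω.1 0 = path ω'.1 0 := by rw [path_zero, path_zero, ω.2.1, ω'.2.1]
  have ha := eq_of_seg_eq h.1 h0 (Nat.zero_le a) (by omega)
  refine Subtype.ext (eq_of_path_eq fun i hi => ?_)
  rcases le_total i a with hia | hai
  · exact eq_of_seg_eq h.1 h0 (Nat.zero_le i) (by omega)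
  · exact eq_of_seg_eq h.2 ha hai hi

/-- Removing step `j` from a walk with fixed endpoint loses no information. -/
def SAWalkTo.splitAround (j k : ℕ) (x : V d) (ω : SAWalkTo (j + 1 + k) x) :
    SAWalk d j × SAWalk d k :=
  (⟨seg (path ω.1) 0 j, seg_zero .., seg_injective ω.2.2.2 (by omega)⟩,
   ⟨seg (path ω.1) (j + 1) k, seg_zero .., seg_injective ω.2.2.2 le_rfl⟩)

lemma SAWalkTo.splitAround_injective (j k : ℕ) (x : V d) :
    Function.Injective (SAWalkTo.splitAround j k x) := by
  rintro ω ω' h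
  simp only [SAWalkTo.splitAround, Prod.mk.injEq, Subtype.mk.injEq] at h
  have h0 : path ω.1 0 = path ω'.1 0 := by rw [path_zero, path_zero, ω.2.1, ω'.2.1]
  have hend : path ω.1 (j + 1 + k) = path ω'.1 (j + 1 + k) := by
    rw [path_self, path_self, ω.2.2.1, ω'.2.2.1]
  have hmid := eq_of_seg_eq_of_end h.2 hend
  refine Subtype.ext (eq_of_path_eq fun i hi => ?_)
  rcases le_or_gt i j with hij | hji
  · exact eq_of_seg_eq h.1 h0 (Nat.zero_le i) (by omega)
  · exact eq_of_seg_eq h.2 hmid hji hi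

variable {D : V d → ℝ} {p : ℝ}

lemma chiLen_add_le (hD : ∀ y, 0 ≤ D y) (hp : 0 ≤ p) (a b : ℕ) :
    chiLen D p (a + b) ≤ chiLen D p a * chiLen D p b := by
  calc chiLen D p (a + b) ≤ 1 * (chiLen D p a * chiLen D p b) :=
        ENNReal.tsum_le_mul_tsum_mul_tsum_of_injective (SAWalk.split_injective a b) fun ω => by
          rw [one_mul, walkWeight_eq_mul D p ω.2.1,
            ENNReal.ofReal_mul (walkWeight_nonneg hD hp _)]
          rfl
    _ = chiLen D p a * chiLen D p b := one_mul _

lemma tsum_walkWeight_ite_step_le (hD : ∀ y, 0 ≤ D y) (hp : 0 ≤ p) (P : V d → Prop)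
    [DecidablePred P] {B : ℝ} (hB : ∀ y, P y → p * D y ≤ B) (j k : ℕ) (x : V d) :
    ∑' ω : SAWalkTo (j + 1 + k) x,
        (if P (path ω.1 (j + 1) - path ω.1 j) then ENNReal.ofReal (walkWeight D p ω.1) else 0)
      ≤ ENNReal.ofReal B * (chiLen D p j * chiLen D p k) := by
  refine ENNReal.tsum_le_mul_tsum_mul_tsum_of_injective
    (SAWalkTo.splitAround_injective j k x) fun ω => ?_
  dsimp only [SAWalkTo.splitAround]
  split_ifs with hstep
  · have hw₁ := walkWeight_nonneg hD hp (seg (path ω.1) 0 j)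
    have hw₂ := walkWeight_nonneg hD hp (seg (path ω.1) (j + 1) k)
    rw [← ENNReal.ofReal_mul hw₁, ← ENNReal.ofReal_mul' (mul_nonneg hw₁ hw₂),
      walkWeight_eq_mul_step_mul D p ω.2.1]
    refine ENNReal.ofReal_le_ofReal ?_
    calc _ = p * D (path ω.1 (j + 1) - path ω.1 j) * (walkWeight D p (seg (path ω.1) 0 j) *
          walkWeight D p (seg (path ω.1) (j + 1) k)) := by ring
      _ ≤ B * _ := mul_le_mul_of_nonneg_right (hB _ hstep) (mul_nonneg hw₁ hw₂)
  · exact zero_le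

lemma sawGLen_le_sum (hD : ∀ y, 0 ≤ D y) (hp : 0 ≤ p) {n : ℕ} (hn : 1 ≤ n) (x : V d) {B : ℝ}
    (hB : ∀ y, nrm x ≤ n * nrm y → p * D y ≤ B) :
    sawGLen D p n x ≤
      ∑ j ∈ range n, ENNReal.ofReal B * (chiLen D p j * chiLen D p (n - 1 - j)) := by
  let long (ω : SAWalkTo n x) (j : ℕ) : ℝ≥0∞ :=
    if nrm x ≤ n * nrm (path ω.1 (j + 1) - path ω.1 j) then
      ENNReal.ofReal (walkWeight D p ω.1) else 0
  have hcover (ω : SAWalkTo n x) :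
      ENNReal.ofReal (walkWeight D p ω.1) ≤ ∑ j ∈ range n, long ω j := by
    obtain ⟨j, hj, hlong⟩ := exists_nrm_le_mul_nrm_step (path ω.1) hn
    rw [path_zero, path_self, ω.2.1, ω.2.2.1, sub_zero] at hlong
    calc _ = long ω j := (if_pos hlong).symm
      _ ≤ _ := single_le_sum (fun _ _ => zero_le) (mem_range.mpr hj)
  calc sawGLen D p n x ≤ ∑' ω, ∑ j ∈ range n, long ω j := ENNReal.tsum_le_tsum hcover
    _ = ∑ j ∈ range n, ∑' ω, long ω j := Summable.tsum_finsetSum fun _ _ => ENNReal.summable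
    _ ≤ _ := sum_le_sum fun j hj => by
        obtain ⟨k, rfl⟩ : ∃ k, n = j + 1 + k := ⟨n - 1 - j, by have := mem_range.mp hj; omega⟩
        rw [show j + 1 + k - 1 - j = k by omega]
        exact tsum_walkWeight_ite_step_le hD hp _ hB j k x

lemma sawGLen_zero_le {L β : ℝ} (hL : 0 < L) (x : V d) :
    sawGLen D p 0 x ≤ ENNReal.ofReal (L ^ β * bkt L x ^ (-β)) := by
  rw [sawGLen_zero]
  by_cases hx : x = 0
  · subst hx
    rw [bkt_zero hL.le, Real.rpow_neg hL.le, mul_inv_cancel₀ (by positivity)]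
    simp [kdelta]
  · simp [kdelta, hx]

lemma sawGLen_le_of_geometric (hD : ∀ y, 0 ≤ D y) (hp : 0 ≤ p) {L β c : ℝ} (hL : 0 < L)
    (hβ : 0 ≤ β) (hc : 0 ≤ c) (hDbd : ∀ y, D y ≤ c * bkt L y ^ (-β)) {C ρ : ℝ} (hC : 0 ≤ C)
    (hρ : 0 < ρ) (hgeo : ∀ j, chiLen D p j ≤ ENNReal.ofReal (C * ρ ^ j)) {n : ℕ} (hn : 1 ≤ n)
    (x : V d) :
    sawGLen D p n x ≤
      ENNReal.ofReal (p * c * (C ^ 2 / ρ) * ((n : ℝ) ^ (⌈β⌉₊ + 1) * ρ ^ n) * bkt L x ^ (-β)) := by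
  have hn' : (1 : ℝ) ≤ n := by exact_mod_cast hn
  set b := bkt L x ^ (-β)
  have hb : 0 ≤ b := Real.rpow_nonneg (bkt_pos hL x).le _
  have hB (y : V d) (h : nrm x ≤ n * nrm y) : p * D y ≤ p * c * n ^ β * b := by
    have := (hDbd y).trans (mul_le_mul_of_nonneg_left (bkt_rpow_neg_le hL hn' hβ h) hc)
    calc p * D y ≤ p * (c * (n ^ β * b)) := mul_le_mul_of_nonneg_left this hp
      _ = _ := by ring
  have hpair : ∀ j ∈ range n,
      chiLen D p j * chiLen D p (n - 1 - j) ≤ ENNReal.ofReal (C ^ 2 * ρ ^ (n - 1)) := fun j hj => by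
    calc _ ≤ ENNReal.ofReal (C * ρ ^ j) * ENNReal.ofReal (C * ρ ^ (n - 1 - j)) :=
          mul_le_mul' (hgeo j) (hgeo _)
      _ = _ := by
          rw [← ENNReal.ofReal_mul (by positivity), mul_mul_mul_comm, ← pow_add, ← sq,
            Nat.add_sub_cancel' (by have := mem_range.mp hj; omega)]
  have hpow : (n : ℝ) ^ β * n ≤ (n : ℝ) ^ (⌈β⌉₊ + 1) := by
    rw [pow_succ, ← Real.rpow_natCast]
    exact mul_le_mul_of_nonneg_right (Real.rpow_le_rpow_of_exponent_le hn' (Nat.le_ceil β))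
      (by positivity)
  have hρpow : ρ ^ (n - 1) = ρ ^ n / ρ := by
    rw [eq_div_iff hρ.ne', ← pow_succ, Nat.sub_add_cancel hn]
  calc sawGLen D p n x
      ≤ ∑ j ∈ range n,
          ENNReal.ofReal (p * c * n ^ β * b) * (chiLen D p j * chiLen D p (n - 1 - j)) :=
        sawGLen_le_sum hD hp hn x hB
    _ ≤ ∑ j ∈ range n, ENNReal.ofReal (p * c * n ^ β * b) * ENNReal.ofReal (C ^ 2 * ρ ^ (n - 1)) :=
        sum_le_sum fun j hj => by gcongr; exact hpair j hj
    _ = ENNReal.ofReal (n * (p * c * n ^ β * b * (C ^ 2 * ρ ^ (n - 1)))) := by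
        rw [sum_const, card_range, nsmul_eq_mul, ← ENNReal.ofReal_mul (by positivity),
          ← ENNReal.ofReal_natCast, ← ENNReal.ofReal_mul (by positivity)]
    _ ≤ _ := by
        refine ENNReal.ofReal_le_ofReal ?_
        calc _ = p * c * (C ^ 2 / ρ) * ρ ^ n * b * ((n : ℝ) ^ β * n) := by
              rw [hρpow]; ring
          _ ≤ p * c * (C ^ 2 / ρ) * ρ ^ n * b * (n : ℝ) ^ (⌈β⌉₊ + 1) :=
              mul_le_mul_of_nonneg_left hpow (by positivity)
          _ = _ := by ring

theorem statement9_general (d : ℕ) (α L c₁ : ℝ) (hα : 0 < α) (hL : 1 ≤ L)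
    (D : V d → ℝ) (hD : IsStepDist D)
    (hDbd : ∀ x : V d, D x ≤ c₁ * L ^ α * bkt L x ^ (-(d : ℝ) - α))
    (p : ℝ) (hp : 0 ≤ p) (hχ : chi D p ≠ ⊤) :
    ∃ K : ℝ, 0 ≤ K ∧
      ∀ x : V d, sawG D p x ≤ ENNReal.ofReal (K * bkt L x ^ (-(d : ℝ) - α)) := by
  have hL0 : 0 < L := by linarith
  set β : ℝ := d + α
  have hβ : 0 ≤ β := by positivity
  have hexp : -(d : ℝ) - α = -β := by ring
  rw [hexp] at hDbd ⊢
  have hc : 0 ≤ c₁ * L ^ α := nonneg_of_mul_nonneg_left ((hD.nonneg 0).trans (hDbd 0))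
    (Real.rpow_pos_of_pos (bkt_pos hL0 0) _)
  obtain ⟨C, ρ, hC, hρ0, hρ1, hgeo⟩ := ENNReal.exists_le_ofReal_mul_pow_of_submul
    (chiLen_add_le hD.nonneg hp) (chi_eq_tsum_chiLen D p ▸ hχ)
  set M := p * (c₁ * L ^ α) * (C ^ 2 / ρ)
  set u : ℕ → ℝ := fun n => M * ((n : ℝ) ^ (⌈β⌉₊ + 1) * ρ ^ n)
  have hu : Summable u := (summable_pow_mul_geometric_of_norm_lt_one _
    (by rwa [Real.norm_of_nonneg hρ0.le])).mul_left M
  have hu0 (n : ℕ) : 0 ≤ u n := by positivity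
  refine ⟨L ^ β + ∑' n, u n, add_nonneg (by positivity) (tsum_nonneg hu0), fun x => ?_⟩
  have hb : 0 ≤ bkt L x ^ (-β) := Real.rpow_nonneg (bkt_pos hL0 x).le _
  calc sawG D p x = sawGLen D p 0 x + ∑' n, sawGLen D p (n + 1) x :=
        tsum_eq_zero_add' ENNReal.summable
    _ ≤ ENNReal.ofReal (L ^ β * bkt L x ^ (-β)) + ∑' n, ENNReal.ofReal (u n * bkt L x ^ (-β)) :=
        add_le_add (sawGLen_zero_le hL0 x) ((ENNReal.tsum_le_tsum fun n =>
          sawGLen_le_of_geometric hD.nonneg hp hL0 hβ hc hDbd hC hρ0 hgeo n.succ_pos x).trans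
            (ENNReal.tsum_comp_le_tsum_of_injective Nat.succ_injective _))
    _ = ENNReal.ofReal ((L ^ β + ∑' n, u n) * bkt L x ^ (-β)) := by
        rw [← ENNReal.ofReal_tsum_of_nonneg (fun n => mul_nonneg (hu0 n) hb) (hu.mul_right _),
          tsum_mul_right, ← ENNReal.ofReal_add (by positivity) (by positivity), add_mul]

/-- subcritical power-law upper bound on the SAW two-point function. -/
theorem statement9 (d : ℕ) (hd : 1 ≤ d) (α L c₁ : ℝ) (hα : 0 < α) (hL : 1 ≤ L)
    (D : V d → ℝ) (hD : IsStepDist D)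
    (hDbd : ∀ x : V d, D x ≤ c₁ * L ^ α * bkt L x ^ (-(d : ℝ) - α))
    (p : ℝ) (hp : 0 ≤ p) (hχ : chi D p ≠ ⊤) :
    ∃ K : ℝ, 0 ≤ K ∧
      ∀ x : V d, sawG D p x ≤ ENNReal.ofReal (K * bkt L x ^ (-(d : ℝ) - α)) :=
  statement9_general d α L c₁ hα hL D hD hDbd p hp hχ

end LongRange
end
end
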